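/- Under Condition A, let (f_i)_{i∈ℕ} be a real sequence with Σ_{i=0}^∞ f_i² / |‖G_i^{(β,α−β)}‖|² < ∞, and set λ_i := −c** · Γ(i+1+α)/Γ(i+1) and c_i := f_i / ( λ_i · |‖G_i^{(β,α−β)}‖|² ). Then Σ_{i=0}^∞ c_i² · |‖G_i^{(α−β,β)}‖|² < ∞. (These are the coefficients of the spectral solution u = ρ^{(α−β,β)} Σ_i c_i G_i^{(α−β,β)} of the fractional diffusion equation with homogeneous Dirichlet conditions, and this summability expresses u ∈ L²_{ρ^{(−(α−β),−β)}}(0,1).) -/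

import Mathlib

open Real

/-- Squared weighted `L²` norm of the Jacobi polynomial `G_j^{(a,b)}` on `(0,1)`. -/
noncomputable def normG2 (a b : ℝ) (j : ℕ) : ℝ :=
  Real.Gamma ((j : ℝ) + a + 1) * Real.Gamma ((j : ℝ) + b + 1) /
    ((2 * (j : ℝ) + a + b + 1) * Real.Gamma ((j : ℝ) + 1) * Real.Gamma ((j : ℝ) + a + b + 1))

/-!
Since `normG2` is symmetric in its parameters, `c_i² ‖G_i^{(α−β,β)}‖² = (f_i² / ‖G_i^{(β,α−β)}‖²) / λ_i²`,
so it suffices that `λ_i²` is bounded away from `0`. Indeed `Γ(i+1+α)/Γ(i+1) ≥ 1` because `Γ` is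
increasing on `[2, ∞)`, and `c** < 0` because `sin(πα) < 0` for `1 < α < 2` while
`sin(π(α−β)) + sin(πβ) > 0`; hence `λ_i² ≥ c**² > 0`.
-/

lemma normG2_comm (a b : ℝ) (j : ℕ) : normG2 a b j = normG2 b a j := by
  unfold normG2
  ring_nf

lemma normG2_pos {a b : ℝ} (ha : -1 < a) (hb : -1 < b) (hab : -1 < a + b) (j : ℕ) :
    0 < normG2 a b j := by
  have hj : (0 : ℝ) ≤ j := j.cast_nonneg
  unfold normG2
  have := Gamma_pos_of_pos (show 0 < (j : ℝ) + a + 1 by linarith)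
  have := Gamma_pos_of_pos (show 0 < (j : ℝ) + b + 1 by linarith)
  have := Gamma_pos_of_pos (show 0 < (j : ℝ) + 1 by linarith)
  have := Gamma_pos_of_pos (show 0 < (j : ℝ) + a + b + 1 by linarith)
  have : 0 < 2 * (j : ℝ) + a + b + 1 := by linarith
  positivity

lemma one_le_Gamma_add_div_Gamma {x s : ℝ} (hx : 0 ≤ x) (hs : 1 ≤ s) :
    1 ≤ Gamma (x + 1 + s) / Gamma (x + 1) := by
  have hΓ : 0 < Gamma (x + 1) := Gamma_pos_of_pos (by linarith)
  rw [le_div_iff₀ hΓ, one_mul]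
  calc Gamma (x + 1) ≤ (x + 1) * Gamma (x + 1) := le_mul_of_one_le_left hΓ.le (by linarith)
    _ = Gamma (x + 1 + 1) := (Gamma_add_one (by linarith)).symm
    _ ≤ Gamma (x + 1 + s) :=
      Gamma_strictMonoOn_Ici.monotoneOn (Set.mem_Ici.2 (by linarith))
        (Set.mem_Ici.2 (by linarith)) (by linarith)

lemma sin_pi_mul_neg {α : ℝ} (h₁ : 1 < α) (h₂ : α < 2) : sin (π * α) < 0 := by
  rw [← sin_sub_two_pi]
  apply sin_neg_of_neg_of_neg_pi_lt <;> nlinarith [pi_pos]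

lemma sin_pi_mul_add_sin_pi_mul_pos {x y : ℝ} (hx₀ : 0 < x) (hx₁ : x ≤ 1) (hy₀ : 0 < y)
    (hy₁ : y ≤ 1) (hxy : x + y < 2) : 0 < sin (π * x) + sin (π * y) := by
  have hsin_nonneg : ∀ t : ℝ, 0 < t → t ≤ 1 → 0 ≤ sin (π * t) := fun t ht₀ ht₁ =>
    sin_nonneg_of_nonneg_of_le_pi (by positivity) (by nlinarith [pi_pos])
  have hsin_pos : ∀ t : ℝ, 0 < t → t < 1 → 0 < sin (π * t) := fun t ht₀ ht₁ =>
    sin_pos_of_pos_of_lt_pi (by positivity) (by nlinarith [pi_pos])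
  rcases hx₁.lt_or_eq with hx | rfl
  · linarith [hsin_pos x hx₀ hx, hsin_nonneg y hy₀ hy₁]
  · linarith [hsin_nonneg 1 one_pos le_rfl, hsin_pos y hy₀ (by linarith)]

lemma summable_sq_div_mul_mul {f lam N : ℕ → ℝ} {m : ℝ} (hm : 0 < m) (hN : ∀ i, 0 ≤ N i)
    (hlam : ∀ i, m ≤ lam i ^ 2) (hf : Summable fun i => f i ^ 2 / N i) :
    Summable fun i => (f i / (lam i * N i)) ^ 2 * N i := by
  refine Summable.of_nonneg_of_le (fun i => mul_nonneg (sq_nonneg _) (hN i)) (fun i => ?_) (hf.mul_left m⁻¹)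
  have hlam_pos : 0 < lam i ^ 2 := hm.trans_le (hlam i)
  have hrewrite : (f i / (lam i * N i)) ^ 2 * N i = f i ^ 2 / N i / lam i ^ 2 := by
    rcases (hN i).eq_or_lt with h | h
    · simp [← h]
    · field_simp
  rw [hrewrite, ← div_eq_inv_mul]
  exact div_le_div_of_nonneg_left (div_nonneg (sq_nonneg _) (hN i)) hm (hlam i)

theorem stmt12 (α β css : ℝ)
    (hα₁ : 1 < α) (hα₂ : α < 2) (hβ₁ : α - 1 ≤ β) (hβ₂ : β ≤ 1)
    (hcss : css = Real.sin (Real.pi * α) /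
      (Real.sin (Real.pi * (α - β)) + Real.sin (Real.pi * β)))
    (f lam c : ℕ → ℝ)
    (hlam : ∀ i : ℕ, lam i = -css * (Real.Gamma ((i : ℝ) + 1 + α) / Real.Gamma ((i : ℝ) + 1)))
    (hc : ∀ i : ℕ, c i = f i / (lam i * normG2 β (α - β) i))
    (hf : Summable fun i : ℕ => (f i) ^ 2 / normG2 β (α - β) i) :
    Summable fun i : ℕ => (c i) ^ 2 * normG2 (α - β) β i := by
  have hcss_neg : css < 0 := hcss ▸ div_neg_of_neg_of_pos (sin_pi_mul_neg hα₁ hα₂)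
    (sin_pi_mul_add_sin_pi_mul_pos (by linarith) (by linarith) (by linarith) hβ₂ (by linarith))
  have hlam_sq : ∀ i : ℕ, css ^ 2 ≤ lam i ^ 2 := fun i => by
    have hr := one_le_Gamma_add_div_Gamma (x := i) i.cast_nonneg hα₁.le
    rw [hlam i, mul_pow, neg_sq]
    exact le_mul_of_one_le_right (sq_nonneg css) (one_le_pow₀ hr)
  simp only [hc, normG2_comm (α - β) β]
  exact summable_sq_div_mul_mul (sq_pos_of_neg hcss_neg)
    (fun i => (normG2_pos (by linarith) (by linarith) (by linarith) i).le) hlam_sq hf
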